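/- Let 0<q<1 be real, h1,h2,l1,l2,α1,α2,β real, t1,t2 nonzero complex, and let (i,i') = (1,2) or (2,1). If β = ε·(h1+h2−l1−l2+α_i−α_{i'}+2) for some ε ∈ {1,−1}, then for every nonzero complex x, (A⟨4⟩(x; h1,h2,l1,l2,α1,α2,β) applied to the function x ↦ x^{−α_i})(x) = −(q^{α_i+h1+1/2}t1 + q^{α_i+h2+1/2}t2 + q^{α_{i'}+l1−1/2}t1 + q^{α_{i'}+l2−1/2}t2)·x^{−α_i}. -/

import Mathlib

open Filter Topology

/-- The infinite q-Pochhammer symbol `(a;q)_∞ = ∏_{j=0}^∞ (1 - q^j a)`. -/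
noncomputable def qPochInf (q : ℝ) (a : ℂ) : ℂ := ∏' j : ℕ, (1 - (q : ℂ) ^ j * a)

/-- `q^r` for a real exponent `r`, using the principal branch of the complex power. -/
noncomputable def qpow (q : ℝ) (r : ℝ) : ℂ := (q : ℂ) ^ (r : ℂ)

/-- The fourth degenerate Ruijsenaars–van Diejen operator `A⟨4⟩` applied to `g` at `x`. -/
noncomputable def A4 (q : ℝ) (t1 t2 : ℂ) (h1 h2 l1 l2 a1 a2 b : ℝ) (g : ℂ → ℂ) (x : ℂ) : ℂ :=
  x⁻¹ * (x - qpow q (h1 + 1/2) * t1) * (x - qpow q (h2 + 1/2) * t2) * g (x / (q : ℂ))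
    + qpow q (a1 + a2) * x⁻¹ * (x - qpow q (l1 - 1/2) * t1) * (x - qpow q (l2 - 1/2) * t2) *
        g ((q : ℂ) * x)
    - ((qpow q a1 + qpow q a2) * x
        + qpow q ((h1 + h2 + l1 + l2 + a1 + a2) / 2) * (qpow q (b / 2) + qpow q (-(b / 2))) *
            t1 * t2 * x⁻¹) * g x

/-!
The shifts `x ↦ x / q` and `x ↦ q x` multiply `x ^ (-αᵢ)` by `q ^ αᵢ` and `q ^ (-αᵢ)`, so
`A⟨4⟩ x ^ (-αᵢ)` is `x ^ (-αᵢ)` times a Laurent polynomial in `x` of degrees `1, 0, -1`.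
The `x`-coefficient vanishes because `q ^ α₁ + q ^ α₂ = q ^ αᵢ + q ^ αᵢ'`, and the `x⁻¹`-coefficient
vanishes because the condition on `β` makes `q ^ ((u + v) / 2) (q ^ (β / 2) + q ^ (-β / 2))` equal
to `q ^ u + q ^ v` with `u = αᵢ + h₁ + h₂ + 1`, `v = αᵢ' + l₁ + l₂ - 1`; the constant term is the
claimed eigenvalue.
-/

lemma Complex.ofReal_mul_cpow {r : ℝ} (hr : 0 < r) (x c : ℂ) :
    ((r : ℂ) * x) ^ c = (r : ℂ) ^ c * x ^ c := by
  rcases eq_or_ne x 0 with rfl | hx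
  · rcases eq_or_ne c 0 with rfl | hc <;> simp [*]
  have hr' : (r : ℂ) ≠ 0 := by exact_mod_cast hr.ne'
  rw [Complex.cpow_def_of_ne_zero (mul_ne_zero hr' hx), Complex.cpow_def_of_ne_zero hr',
    Complex.cpow_def_of_ne_zero hx, Complex.log_ofReal_mul hr hx, add_mul, Complex.exp_add,
    Complex.ofReal_log hr.le]

lemma Complex.div_ofReal_cpow {r : ℝ} (hr : 0 < r) (x c : ℂ) :
    (x / r) ^ c = x ^ c / (r : ℂ) ^ c := by
  rw [div_eq_inv_mul, ← Complex.ofReal_inv, Complex.ofReal_mul_cpow (inv_pos.mpr hr),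
    Complex.ofReal_inv, Complex.inv_cpow_ofReal_nonneg hr.le, div_eq_inv_mul]

lemma qpow_add {q : ℝ} (hq : 0 < q) (r s : ℝ) : qpow q (r + s) = qpow q r * qpow q s := by
  rw [qpow, Complex.ofReal_add, Complex.cpow_add _ _ (by exact_mod_cast hq.ne')]; rfl

lemma qpow_neg (q r : ℝ) : qpow q (-r) = (qpow q r)⁻¹ := by
  rw [qpow, Complex.ofReal_neg, Complex.cpow_neg]; rfl

lemma qpow_ne_zero {q : ℝ} (hq : 0 < q) (r : ℝ) : qpow q r ≠ 0 := by
  simp [qpow, hq.ne']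

lemma qpow_half_add_mul_add_qpow_neg {q : ℝ} (hq : 0 < q) {u v b : ℝ}
    (hb : b = u - v ∨ b = -(u - v)) :
    qpow q ((u + v) / 2) * (qpow q (b / 2) + qpow q (-(b / 2))) = qpow q u + qpow q v := by
  rw [mul_add, ← qpow_add hq, ← qpow_add hq]
  rcases hb with rfl | rfl
  · congr 2 <;> ring
  · rw [add_comm (qpow q u)]; congr 2 <;> ring

theorem stmt16_general (q : ℝ) (hq0 : 0 < q)
    (h1 h2 l1 l2 a1 a2 b : ℝ) (t1 t2 : ℂ)
    (ai ai' : ℝ) (hii : (ai = a1 ∧ ai' = a2) ∨ (ai = a2 ∧ ai' = a1))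
    (hb : b = h1 + h2 - l1 - l2 + ai - ai' + 2 ∨ b = -(h1 + h2 - l1 - l2 + ai - ai' + 2)) :
    ∀ x : ℂ, x ≠ 0 →
      A4 q t1 t2 h1 h2 l1 l2 a1 a2 b (fun y => y ^ ((-ai : ℝ) : ℂ)) x
        = -(qpow q (ai + h1 + 1/2) * t1 + qpow q (ai + h2 + 1/2) * t2
            + qpow q (ai' + l1 - 1/2) * t1 + qpow q (ai' + l2 - 1/2) * t2) *
          x ^ ((-ai : ℝ) : ℂ) := by
  intro x _
  have hcoef : qpow q ((h1 + h2 + l1 + l2 + a1 + a2) / 2) * (qpow q (b / 2) + qpow q (-(b / 2)))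
      = qpow q (ai + (h1 + 1/2) + (h2 + 1/2)) + qpow q (ai' + (l1 - 1/2) + (l2 - 1/2)) := by
    rw [show (h1 + h2 + l1 + l2 + a1 + a2) / 2
        = ((ai + (h1 + 1/2) + (h2 + 1/2)) + (ai' + (l1 - 1/2) + (l2 - 1/2))) / 2 by
      rcases hii with ⟨rfl, rfl⟩ | ⟨rfl, rfl⟩ <;> ring]
    exact qpow_half_add_mul_add_qpow_neg hq0 <| by
      rcases hb with rfl | rfl <;> [left; right] <;> ring
  simp only [A4, hcoef, Complex.div_ofReal_cpow hq0, Complex.ofReal_mul_cpow hq0, ← qpow.eq_1]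
  rcases hii with ⟨rfl, rfl⟩ | ⟨rfl, rfl⟩ <;>
  · simp only [sub_eq_add_neg, qpow_add hq0, qpow_neg]
    field_simp [qpow_ne_zero hq0]
    ring

theorem stmt16 (q : ℝ) (hq0 : 0 < q) (hq1 : q < 1)
    (h1 h2 l1 l2 a1 a2 b : ℝ) (t1 t2 : ℂ) (ht1 : t1 ≠ 0) (ht2 : t2 ≠ 0)
    (ai ai' : ℝ) (hii : (ai = a1 ∧ ai' = a2) ∨ (ai = a2 ∧ ai' = a1))
    (hb : b = h1 + h2 - l1 - l2 + ai - ai' + 2 ∨ b = -(h1 + h2 - l1 - l2 + ai - ai' + 2)) :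
    ∀ x : ℂ, x ≠ 0 →
      A4 q t1 t2 h1 h2 l1 l2 a1 a2 b (fun y => y ^ ((-ai : ℝ) : ℂ)) x
        = -(qpow q (ai + h1 + 1/2) * t1 + qpow q (ai + h2 + 1/2) * t2
            + qpow q (ai' + l1 - 1/2) * t1 + qpow q (ai' + l2 - 1/2) * t2) *
          x ^ ((-ai : ℝ) : ℂ) :=
  stmt16_general q hq0 h1 h2 l1 l2 a1 a2 b t1 t2 ai ai' hii hb
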